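/- arXiv:2212.04273 — 4 statements merged into one kernel-verified Lean document; each statement's English description precedes it below -/
import Mathlib

section
/- Let d ≥ 1, let P⁻ and P⁺ be finite families of points in ℝ^d, and let q⁻, q⁺ ∈ ℝ^d be two distinct points with Tukey depths t(q⁻; P⁻) and t(q⁺; P⁺) respectively. Set w = q⁺ − q⁻ and replace every point of P⁻ and P⁺ by its projection along w. Then every linear classifier on the projected families makes at least min(t(q⁻; P⁻), t(q⁺; P⁺)) misclassifications; that is, for every nonzero v ∈ ℝ^d and every c ∈ ℝ, the number of indices i with ⟪π_w(P⁻ i), v⟫ ≥ c plus the number of indices j with ⟪π_w(P⁺ j), v⟫ < c is at least min(t(q⁻; P⁻), t(q⁺; P⁺)). -/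
open scoped InnerProductSpace
open scoped Classical

/-- Projection of a point `p` along the vector `w`: the orthogonal projection of `p`
onto the hyperplane through the origin orthogonal to `w`. -/
noncomputable def proj {d : ℕ} (w p : EuclideanSpace ℝ (Fin d)) : EuclideanSpace ℝ (Fin d) :=
  p - (⟪p, w⟫_ℝ / ‖w‖ ^ 2) • w

/-- Tukey depth of `q` with respect to the finite family `P`: the minimum, over nonzero
vectors `v`, of the number of indices `i` with `⟪P i - q, v⟫ ≥ 0`. -/
noncomputable def tukeyDepth {d m : ℕ} (q : EuclideanSpace ℝ (Fin d))
    (P : Fin m → EuclideanSpace ℝ (Fin d)) : ℕ :=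
  sInf {k : ℕ | ∃ v : EuclideanSpace ℝ (Fin d), v ≠ 0 ∧
    k = (Finset.univ.filter fun i => 0 ≤ ⟪P i - q, v⟫_ℝ).card}

/-! Since `π_w` is self-adjoint, `⟪π_w p, v⟫ = ⟪p, u⟫` with `u = π_w v`, and `u ⟂ w` puts `q⁻` and
`q⁺` on the same level `a` of `⟪·, u⟫`. If `c ≤ a`, the closed halfspace `⟪· - q⁻, u⟫ ≥ 0` holds at
least `t(q⁻; P⁻)` points of `P⁻`, all labeled positive; if `a < c`, the halfspace `⟪· - q⁺, u⟫ ≤ 0`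
holds at least `t(q⁺; P⁺)` points of `P⁺`, all labeled negative. -/

lemma inner_proj_left {d : ℕ} (w p v : EuclideanSpace ℝ (Fin d)) :
    ⟪proj w p, v⟫_ℝ = ⟪p, proj w v⟫_ℝ := by
  simp only [proj, inner_sub_left, inner_sub_right, real_inner_smul_left, real_inner_smul_right,
    real_inner_comm w v]
  ring

lemma inner_proj_right_self {d : ℕ} (w v : EuclideanSpace ℝ (Fin d)) :
    ⟪w, proj w v⟫_ℝ = 0 := by
  rcases eq_or_ne w 0 with rfl | hw
  · exact inner_zero_left _
  have hnorm : ‖w‖ ≠ 0 := norm_ne_zero_iff.mpr hw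
  simp only [proj, inner_sub_right, real_inner_smul_right, real_inner_self_eq_norm_sq,
    real_inner_comm w v]
  field_simp
  ring

section TukeyDepth

variable {d m : ℕ} (q : EuclideanSpace ℝ (Fin d)) (P : Fin m → EuclideanSpace ℝ (Fin d))

lemma tukeyDepth_le_card : tukeyDepth q P ≤ m := by
  rcases Set.eq_empty_or_nonempty {k : ℕ | ∃ v : EuclideanSpace ℝ (Fin d), v ≠ 0 ∧
      k = (Finset.univ.filter fun i => 0 ≤ ⟪P i - q, v⟫_ℝ).card} with hS | ⟨k, hk⟩
  · simp only [tukeyDepth, hS, Nat.sInf_empty, zero_le]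
  · obtain ⟨v, hv, rfl⟩ := hk
    calc tukeyDepth q P ≤ _ := Nat.sInf_le ⟨v, hv, rfl⟩
      _ ≤ m := (Finset.card_filter_le _ _).trans_eq (Finset.card_fin m)

/-- Unlike the definition, `u = 0` is allowed: the halfspace is then everything. -/
lemma tukeyDepth_le_card_filter (u : EuclideanSpace ℝ (Fin d)) :
    tukeyDepth q P ≤ (Finset.univ.filter fun i => 0 ≤ ⟪P i - q, u⟫_ℝ).card := by
  rcases eq_or_ne u 0 with rfl | hu
  · simpa using tukeyDepth_le_card q P
  · exact Nat.sInf_le ⟨u, hu, rfl⟩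

lemma tukeyDepth_le_card_filter_le {u : EuclideanSpace ℝ (Fin d)} {c : ℝ} (hc : c ≤ ⟪q, u⟫_ℝ) :
    tukeyDepth q P ≤ (Finset.univ.filter fun i => c ≤ ⟪P i, u⟫_ℝ).card := by
  refine (tukeyDepth_le_card_filter q P u).trans (Finset.card_le_card fun i => ?_)
  simp only [Finset.mem_filter, Finset.mem_univ, true_and, inner_sub_left]
  intro hi
  linarith

lemma tukeyDepth_le_card_filter_lt {u : EuclideanSpace ℝ (Fin d)} {c : ℝ} (hc : ⟪q, u⟫_ℝ < c) :
    tukeyDepth q P ≤ (Finset.univ.filter fun i => ⟪P i, u⟫_ℝ < c).card := by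
  refine (tukeyDepth_le_card_filter q P (-u)).trans (Finset.card_le_card fun i => ?_)
  simp only [Finset.mem_filter, Finset.mem_univ, true_and, inner_sub_left, inner_neg_right]
  intro hi
  linarith

end TukeyDepth

theorem tukey_projection_misclassifications_general {d m₁ m₂ : ℕ}
    (Pm : Fin m₁ → EuclideanSpace ℝ (Fin d)) (Pp : Fin m₂ → EuclideanSpace ℝ (Fin d))
    (qm qp : EuclideanSpace ℝ (Fin d))
    (v : EuclideanSpace ℝ (Fin d)) (c : ℝ) :
    min (tukeyDepth qm Pm) (tukeyDepth qp Pp) ≤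
      (Finset.univ.filter fun i => c ≤ ⟪proj (qp - qm) (Pm i), v⟫_ℝ).card +
      (Finset.univ.filter fun j => ⟪proj (qp - qm) (Pp j), v⟫_ℝ < c).card := by
  set u := proj (qp - qm) v
  simp only [inner_proj_left]
  have hq : ⟪qp, u⟫_ℝ = ⟪qm, u⟫_ℝ := by
    have := inner_proj_right_self (qp - qm) v
    rwa [inner_sub_left, sub_eq_zero] at this
  rcases le_or_gt c ⟪qm, u⟫_ℝ with hc | hc
  · exact (min_le_left _ _).trans ((tukeyDepth_le_card_filter_le qm Pm hc).trans le_self_add)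
  · exact (min_le_right _ _).trans
      ((tukeyDepth_le_card_filter_lt qp Pp (hq ▸ hc)).trans le_add_self)

theorem tukey_projection_misclassifications {d m₁ m₂ : ℕ} (hd : 1 ≤ d)
    (Pm : Fin m₁ → EuclideanSpace ℝ (Fin d)) (Pp : Fin m₂ → EuclideanSpace ℝ (Fin d))
    (qm qp : EuclideanSpace ℝ (Fin d)) (hq : qm ≠ qp)
    (v : EuclideanSpace ℝ (Fin d)) (hv : v ≠ 0) (c : ℝ) :
    min (tukeyDepth qm Pm) (tukeyDepth qp Pp) ≤
      (Finset.univ.filter fun i => c ≤ ⟪proj (qp - qm) (Pm i), v⟫_ℝ).card +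
      (Finset.univ.filter fun j => ⟪proj (qp - qm) (Pp j), v⟫_ℝ < c).card :=
  tukey_projection_misclassifications_general Pm Pp qm qp v c
end

section
/- Let d ≥ 1 and let v₁, …, v_{d+1} ∈ ℝ^d satisfy ‖v_i‖ = 1 for all i and ⟪v_i, v_j⟫ = −1/d for all i ≠ j (the vertices of a regular d-simplex centered at the origin with vertices at unit distance from the origin). Then for every point p ∈ ℝ^d there exists a unit vector r ∈ ℝ^d such that ⟪v_i, r⟫ ≤ ⟪p, r⟫ − 1/d holds for at least d of the d+1 indices i. -/
/-! The vertices sum to zero, since `‖∑ i, v i‖² = ∑ i, (1 + d · (-1/d)) = 0`. Hence some vertex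
`v k` satisfies `⟪p, v k⟫ ≥ 0`, and `r = v k` works for the `d` other vertices, whose inner
product with `v k` is exactly `-1/d`. -/

open scoped InnerProductSpace
open scoped Classical

open Finset

section

variable {E : Type*} [NormedAddCommGroup E] [InnerProductSpace ℝ E]

theorem sum_inner_eq_zero_of_regular_simplex {n : ℕ} (hn : n ≠ 0) {v : Fin (n + 1) → E}
    (hnorm : ∀ i, ‖v i‖ = 1) (hinner : ∀ i j, i ≠ j → ⟪v i, v j⟫_ℝ = -1 / n) (i : Fin (n + 1)) :
    ∑ j, ⟪v i, v j⟫_ℝ = 0 := by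
  have hoff : ∑ j ∈ univ.erase i, ⟪v i, v j⟫_ℝ = ∑ _j ∈ univ.erase i, (-1 / n : ℝ) :=
    sum_congr rfl fun j hj => hinner i j (ne_of_mem_erase hj).symm
  rw [← add_sum_erase _ _ (mem_univ i), real_inner_self_eq_norm_sq, hnorm i, hoff, sum_const,
    card_erase_of_mem (mem_univ i), card_univ, Fintype.card_fin, Nat.add_sub_cancel, nsmul_eq_mul]
  field_simp
  ring

theorem sum_eq_zero_of_regular_simplex {n : ℕ} (hn : n ≠ 0) {v : Fin (n + 1) → E}
    (hnorm : ∀ i, ‖v i‖ = 1) (hinner : ∀ i j, i ≠ j → ⟪v i, v j⟫_ℝ = -1 / n) :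
    ∑ i, v i = 0 := by
  refine (inner_self_eq_zero (𝕜 := ℝ)).mp ?_
  rw [sum_inner]
  exact sum_eq_zero fun i _ => by
    rw [inner_sum, sum_inner_eq_zero_of_regular_simplex hn hnorm hinner i]

theorem exists_inner_nonneg_of_sum_eq_zero {ι : Type*} [Fintype ι] [Nonempty ι] {v : ι → E}
    (hsum : ∑ i, v i = 0) (p : E) : ∃ k, 0 ≤ ⟪p, v k⟫_ℝ := by
  have hle : ∑ _i : ι, (0 : ℝ) ≤ ∑ i, ⟪p, v i⟫_ℝ := by
    rw [← inner_sum, hsum, inner_zero_right, sum_const_zero]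
  obtain ⟨k, -, hk⟩ := exists_le_of_sum_le univ_nonempty hle
  exact ⟨k, hk⟩

end

theorem simplex_direction_lemma {d : ℕ} (hd : 1 ≤ d)
    (v : Fin (d + 1) → EuclideanSpace ℝ (Fin d))
    (hnorm : ∀ i, ‖v i‖ = 1)
    (hinner : ∀ i j, i ≠ j → ⟪v i, v j⟫_ℝ = -1 / d)
    (p : EuclideanSpace ℝ (Fin d)) :
    ∃ r : EuclideanSpace ℝ (Fin d), ‖r‖ = 1 ∧
      d ≤ (Finset.univ.filter fun i => ⟪v i, r⟫_ℝ ≤ ⟪p, r⟫_ℝ - 1 / d).card := by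
  have hsum := sum_eq_zero_of_regular_simplex (by omega) hnorm hinner
  obtain ⟨k, hk⟩ := exists_inner_nonneg_of_sum_eq_zero hsum p
  refine ⟨v k, hnorm k, ?_⟩
  have hothers : univ.erase k ⊆ univ.filter fun i => ⟪v i, v k⟫_ℝ ≤ ⟪p, v k⟫_ℝ - 1 / d := by
    intro i hi
    rw [mem_filter, hinner i k (ne_of_mem_erase hi), neg_div]
    exact ⟨mem_univ i, by linarith⟩
  calc d = (univ.erase k).card := by simp
    _ ≤ _ := card_le_card hothers
end

section
/- For every d > 0 and all integers n ≥ m > 0, there exist a finite family P of m points and a finite family Q of n points in ℝ^{d+1} such that for every unit vector w ∈ ℝ^{d+1}, after projecting all points of P and Q along w, there exists a hyperplane strictly separating all n projected points of Q from at least ⌊m·d/(d+1)⌋ of the projected points of P; that is, there exist a nonzero vector v ∈ ℝ^{d+1} and c ∈ ℝ with ⟪π_w(Q j), v⟫ > c for all j and ⟪π_w(P i), v⟫ < c for at least ⌊m·d/(d+1)⌋ indices i. -/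
open scoped InnerProductSpace
open scoped Classical

/-!
Put the points of `P` on the standard basis vectors `e₀, …, e_d`, cycling through them, and all
points of `Q` at the origin. Given `w`, pick `j` with `w j ≠ 0`; then some `v ⊥ w` has all
coordinates `-1` off `j`. Since `v ⊥ w`, projecting along `w` does not change inner products
with `v`: every `π_w(e_k)` with `k ≠ j` has `⟪·, v⟫ = -1` and the origin has `0`, so the
hyperplane `⟪·, v⟫ = -1/2` works, and at most `⌈m/(d+1)⌉` points of `P` sit at `e_j`.
-/

open Finset

lemma inner_proj_of_inner_eq_zero {N : ℕ} {w v : EuclideanSpace ℝ (Fin N)} (h : ⟪v, w⟫_ℝ = 0)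
    (p : EuclideanSpace ℝ (Fin N)) : ⟪proj w p, v⟫_ℝ = ⟪p, v⟫_ℝ := by
  rw [proj, inner_sub_left, real_inner_smul_left, real_inner_comm v w, h, mul_zero, sub_zero]

lemma EuclideanSpace.exists_inner_eq_zero_forall_ne_apply_eq_neg_one {ι : Type*} [Fintype ι]
    [DecidableEq ι] (w : EuclideanSpace ℝ ι) {j : ι} (hj : w j ≠ 0) :
    ∃ v : EuclideanSpace ℝ ι, ⟪v, w⟫_ℝ = 0 ∧ ∀ k ≠ j, v k = -1 := by
  refine ⟨EuclideanSpace.single j ((∑ k, w k) / w j) - WithLp.toLp 2 1, ?_, fun k hk => ?_⟩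
  · rw [inner_sub_left, EuclideanSpace.inner_single_left, PiLp.inner_apply]
    simp [div_mul_cancel₀ _ hj]
  · simp [hk]

lemma mul_card_filter_ofNat_eq_le (m d : ℕ) (j : Fin (d + 1)) :
    (d + 1) * #{i : Fin m | Fin.ofNat (d + 1) i = j} ≤ m + d := by
  have hcount : #{i : Fin m | Fin.ofNat (d + 1) i = j} = m.count (· ≡ j [MOD d + 1]) := by
    rw [Nat.count_eq_card_filter_range, ← Nat.Iio_eq_range, ← Fin.map_valEmbedding_univ,
      filter_map, card_map]
    congr 1
    ext i
    simp [Fin.ext_iff, Nat.ModEq, Nat.mod_eq_of_lt j.2]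
  rw [hcount, Nat.count_modEq_card _ d.succ_pos]
  have := Nat.div_add_mod m (d + 1)
  have := Nat.mod_lt m d.succ_pos
  split_ifs <;> grind

lemma le_card_filter_ofNat_ne (m d : ℕ) (j : Fin (d + 1)) :
    m * d / (d + 1) ≤ #{i : Fin m | Fin.ofNat (d + 1) i ≠ j} := by
  have hfibre := mul_card_filter_ofNat_eq_le m d j
  have hsplit := card_filter_add_card_filter_not (s := (univ : Finset (Fin m)))
    (fun i => Fin.ofNat (d + 1) i = j)
  rw [card_univ, Fintype.card_fin] at hsplit
  refine Nat.lt_succ_iff.1 ((Nat.div_lt_iff_lt_mul d.succ_pos).2 ?_)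
  nlinarith

theorem projection_hard_instance_general (d : ℕ) (hd : 0 < d) (m n : ℕ) :
    ∃ P : Fin m → EuclideanSpace ℝ (Fin (d + 1)),
    ∃ Q : Fin n → EuclideanSpace ℝ (Fin (d + 1)),
      ∀ w : EuclideanSpace ℝ (Fin (d + 1)), ‖w‖ = 1 →
        ∃ v : EuclideanSpace ℝ (Fin (d + 1)), v ≠ 0 ∧ ∃ c : ℝ,
          (∀ j, c < ⟪proj w (Q j), v⟫_ℝ) ∧
          m * d / (d + 1) ≤ (Finset.univ.filter fun i => ⟪proj w (P i), v⟫_ℝ < c).card := by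
  refine ⟨fun i => EuclideanSpace.single (Fin.ofNat (d + 1) i) 1, fun _ => 0, fun w hw => ?_⟩
  obtain ⟨j, hj⟩ : ∃ j, w j ≠ 0 := by
    by_contra! h
    have : w = 0 := by ext k; simp [h k]
    simp [this] at hw
  obtain ⟨v, hvw, hv⟩ := EuclideanSpace.exists_inner_eq_zero_forall_ne_apply_eq_neg_one w hj
  have : Nontrivial (Fin (d + 1)) := Fin.nontrivial_iff_two_le.2 (by omega)
  obtain ⟨k, hk⟩ := exists_ne j
  refine ⟨v, fun h => by simpa [h] using hv k hk, -1 / 2, fun _ => by norm_num [proj],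
    (le_card_filter_ofNat_ne m d j).trans (card_le_card fun i hi => ?_)⟩
  simp only [mem_filter, mem_univ, true_and] at hi ⊢
  rw [inner_proj_of_inner_eq_zero hvw, EuclideanSpace.inner_single_left, hv _ hi]
  norm_num

theorem projection_hard_instance (d : ℕ) (hd : 0 < d) (m n : ℕ) (hm : 0 < m) (hmn : m ≤ n) :
    ∃ P : Fin m → EuclideanSpace ℝ (Fin (d + 1)),
    ∃ Q : Fin n → EuclideanSpace ℝ (Fin (d + 1)),
      ∀ w : EuclideanSpace ℝ (Fin (d + 1)), ‖w‖ = 1 →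
        ∃ v : EuclideanSpace ℝ (Fin (d + 1)), v ≠ 0 ∧ ∃ c : ℝ,
          (∀ j, c < ⟪proj w (Q j), v⟫_ℝ) ∧
          m * d / (d + 1) ≤ (Finset.univ.filter fun i => ⟪proj w (P i), v⟫_ℝ < c).card :=
  projection_hard_instance_general d hd m n
end

section
/- Let e, z, R ∈ ℝ^{d+1} be unit vectors with ⟪e, z⟫ = 0 and ⟪R, e⟫ = 0, let α, β ∈ ℝ with α² + β² = 1, and set w = α·e + β·z. Let u ∈ ℝ^{d+1} with ⟪u, e⟫ = 0 and ‖u‖ ≤ 1. Then the projection u' = u − ⟪w, u⟫·w of u along w satisfies ⟪u', R⟫ ≤ ⟪u, R⟫ + β². -/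
open scoped InnerProductSpace

theorem projected_simplex_vertex_inner_bound {d : ℕ}
    (e z R : EuclideanSpace ℝ (Fin (d + 1)))
    (he : ‖e‖ = 1) (hz : ‖z‖ = 1) (hR : ‖R‖ = 1)
    (hez : ⟪e, z⟫_ℝ = 0) (hRe : ⟪R, e⟫_ℝ = 0)
    (α β : ℝ) (hαβ : α ^ 2 + β ^ 2 = 1)
    (w : EuclideanSpace ℝ (Fin (d + 1))) (hw : w = α • e + β • z)
    (u : EuclideanSpace ℝ (Fin (d + 1))) (hue : ⟪u, e⟫_ℝ = 0) (hu : ‖u‖ ≤ 1) :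
    ⟪u - ⟪w, u⟫_ℝ • w, R⟫_ℝ ≤ ⟪u, R⟫_ℝ + β ^ 2 := by
  have heu : ⟪e, u⟫_ℝ = 0 := by rw [real_inner_comm]; exact hue
  have heR : ⟪e, R⟫_ℝ = 0 := by rw [real_inner_comm]; exact hRe
  have hwu : ⟪w, u⟫_ℝ = β * ⟪z, u⟫_ℝ := by
    rw [hw, inner_add_left, real_inner_smul_left, real_inner_smul_left, heu]; ring
  have hwR : ⟪w, R⟫_ℝ = β * ⟪z, R⟫_ℝ := by
    rw [hw, inner_add_left, real_inner_smul_left, real_inner_smul_left, heR]; ring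
  have hkey : ⟪u - ⟪w, u⟫_ℝ • w, R⟫_ℝ
      = ⟪u, R⟫_ℝ - β ^ 2 * (⟪z, u⟫_ℝ * ⟪z, R⟫_ℝ) := by
    rw [inner_sub_left, real_inner_smul_left, hwu, hwR]; ring
  rw [hkey]
  have h1 : |⟪z, u⟫_ℝ| ≤ 1 := by
    calc |⟪z, u⟫_ℝ| ≤ ‖z‖ * ‖u‖ := abs_real_inner_le_norm z u
    _ ≤ 1 := by rw [hz]; simpa using hu
  have h2 : |⟪z, R⟫_ℝ| ≤ 1 := by
    calc |⟪z, R⟫_ℝ| ≤ ‖z‖ * ‖R‖ := abs_real_inner_le_norm z R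
    _ = 1 := by rw [hz, hR]; ring
  have h3 : |⟪z, u⟫_ℝ * ⟪z, R⟫_ℝ| ≤ 1 := by
    rw [abs_mul]
    calc |⟪z, u⟫_ℝ| * |⟪z, R⟫_ℝ| ≤ 1 * 1 := by
          exact mul_le_mul h1 h2 (abs_nonneg _) zero_le_one
    _ = 1 := one_mul 1
  nlinarith [neg_abs_le (⟪z, u⟫_ℝ * ⟪z, R⟫_ℝ), sq_nonneg β]
end
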